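/- arXiv:2111.01925 — 4 statements merged into one kernel-verified Lean document; each statement's English description precedes it below -/
import Mathlib

section
/- A compact subset A of [0,1] is an attractor of an IFS consisting of n contractions on [0,1] if and only if A × {0}^{d-1} (viewed as a subset of [0,1]^d) is an attractor of an IFS consisting of n contractions on [0,1]^d. -/
/-! The embedding `a ↦ (a,0,…,0)` is an isometry and the projection to the first coordinate is a
`1`-Lipschitz left inverse of it. Conjugating by this pair (`f ↦ emb ∘ f ∘ proj` and
`g ↦ proj ∘ g ∘ emb`) keeps Lipschitz constants below `1` and carries the self-similarity
equation `A = ⋃ fᵢ(A)` back and forth, with the same number of maps. -/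

open Metric Set Topology Filter TopologicalSpace

noncomputable section

/-- The unit cube `[0,1]^d` with the Euclidean metric. -/
abbrev unitCube (d : ℕ) : Type :=
  {x : EuclideanSpace ℝ (Fin d) // ∀ i, x i ∈ Set.Icc (0:ℝ) 1}

/-- A contraction: a Lipschitz map with constant `< 1`. -/
def IsContraction {X : Type*} [MetricSpace X] (f : X → X) : Prop :=
  ∃ L : NNReal, L < 1 ∧ LipschitzWith L f

/-- A weak contraction: `d(f x, f y) < d(x, y)` for `x ≠ y`. -/
def IsWeakContraction {X : Type*} [MetricSpace X] (f : X → X) : Prop :=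
  ∀ x y, x ≠ y → dist (f x) (f y) < dist x y

/-- `Ld n d`: attractors of IFSs of `n` contractions on `[0,1]^d`,
as a subset of the hyperspace of nonempty compact sets. -/
def Ld (n d : ℕ) : Set (NonemptyCompacts (unitCube d)) :=
  {A | ∃ f : Fin n → unitCube d → unitCube d,
    (∀ i, IsContraction (f i)) ∧
      (A : Set (unitCube d)) = ⋃ i, f i '' (A : Set (unitCube d))}

/-- `wLd n d`: attractors of systems of `n` weak contractions on `[0,1]^d`. -/
def wLd (n d : ℕ) : Set (NonemptyCompacts (unitCube d)) :=
  {A | ∃ f : Fin n → unitCube d → unitCube d,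
    (∀ i, IsWeakContraction (f i)) ∧
      (A : Set (unitCube d)) = ⋃ i, f i '' (A : Set (unitCube d))}

def IFSd (d : ℕ) : Set (NonemptyCompacts (unitCube d)) := ⋃ n, Ld n d

def wIFSd (d : ℕ) : Set (NonemptyCompacts (unitCube d)) := ⋃ n, wLd n d

/-- The embedding `[0,1] → [0,1]^d`, `a ↦ (a,0,…,0)`. -/
def emb (d : ℕ) (hd : 0 < d) (x : unitCube 1) : unitCube d :=
  ⟨(WithLp.toLp 2 (fun i => if i = (⟨0, hd⟩ : Fin d) then x.1 0 else 0) : EuclideanSpace ℝ (Fin d)),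
    fun i => by
      dsimp only
      split_ifs
      · exact x.2 0
      · exact ⟨le_refl 0, zero_le_one⟩⟩

/-- The projection `[0,1]^d → [0,1]` onto the first coordinate. -/
def projL (d : ℕ) (hd : 0 < d) (x : unitCube d) : unitCube 1 :=
  ⟨(WithLp.toLp 2 (fun _ => x.1 ⟨0, hd⟩) : EuclideanSpace ℝ (Fin 1)), fun _ => x.2 ⟨0, hd⟩⟩

def IsIFSAttractor {X : Type*} [MetricSpace X] (ι : Type*) (A : Set X) : Prop :=
  ∃ f : ι → X → X, (∀ i, IsContraction (f i)) ∧ A = ⋃ i, f i '' A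

section Retract

variable {X Y : Type*} {e : X → Y} {p : Y → X}

theorem Set.image_eq_iUnion_image_conj {ι : Type*} (hpe : Function.LeftInverse p e)
    {A : Set X} {f : ι → X → X} (hA : A = ⋃ i, f i '' A) :
    e '' A = ⋃ i, (e ∘ f i ∘ p) '' (e '' A) :=
  calc e '' A = ⋃ i, e '' (f i '' A) := by rw [← image_iUnion, ← hA]
    _ = ⋃ i, (e ∘ f i ∘ p) '' (e '' A) := by
      simp only [image_image, Function.comp_apply, hpe _]

theorem Set.eq_iUnion_image_conj {ι : Type*} (hpe : Function.LeftInverse p e)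
    {A : Set X} {g : ι → Y → Y} (hA : e '' A = ⋃ i, g i '' (e '' A)) :
    A = ⋃ i, (p ∘ g i ∘ e) '' A :=
  calc A = p '' (e '' A) := (hpe.image_image A).symm
    _ = p '' ⋃ i, g i '' (e '' A) := congrArg (p '' ·) hA
    _ = ⋃ i, (p ∘ g i ∘ e) '' A := by simp only [image_iUnion, image_image, Function.comp_apply]

variable [MetricSpace X] [MetricSpace Y]

theorem IsContraction.conj {f : X → X} (hf : IsContraction f)
    (he : LipschitzWith 1 e) (hp : LipschitzWith 1 p) : IsContraction (e ∘ f ∘ p) := by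
  obtain ⟨L, hL, hfL⟩ := hf
  exact ⟨L, hL, by simpa using he.comp (hfL.comp hp)⟩

theorem isIFSAttractor_image_iff (ι : Type*) (A : Set X) (he : Isometry e)
    (hp : LipschitzWith 1 p) (hpe : Function.LeftInverse p e) :
    IsIFSAttractor ι (e '' A) ↔ IsIFSAttractor ι A := by
  constructor
  · rintro ⟨g, hg, hgA⟩
    exact ⟨fun i => p ∘ g i ∘ e, fun i => (hg i).conj hp he.lipschitz,
      Set.eq_iUnion_image_conj hpe hgA⟩
  · rintro ⟨f, hf, hfA⟩
    exact ⟨fun i => e ∘ f i ∘ p, fun i => (hf i).conj he.lipschitz hp,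
      Set.image_eq_iUnion_image_conj hpe hfA⟩

end Retract

theorem dist_unitCube_one (x y : unitCube 1) : dist x y = dist (x.1 0) (y.1 0) := by
  rw [Subtype.dist_eq, EuclideanSpace.dist_eq]
  simp [Real.sqrt_sq_eq_abs, Real.dist_eq]

theorem leftInverse_projL_emb (d : ℕ) (hd : 0 < d) :
    Function.LeftInverse (projL d hd) (emb d hd) := by
  intro x
  ext i
  rw [Fin.eq_zero i]
  simp [projL, emb]

theorem isometry_emb (d : ℕ) (hd : 0 < d) : Isometry (emb d hd) := by
  refine Isometry.of_dist_eq fun x y => ?_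
  have hsingle : ∀ z : unitCube 1, (emb d hd z).1 = PiLp.single 2 ⟨0, hd⟩ (z.1 0) := by
    intro z
    ext i
    simp [emb, PiLp.single_apply]
  rw [Subtype.dist_eq, hsingle, hsingle, PiLp.dist_single_same, dist_unitCube_one]

theorem lipschitzWith_projL (d : ℕ) (hd : 0 < d) : LipschitzWith 1 (projL d hd) :=
  LipschitzWith.of_dist_le_mul fun x y => by
    rw [NNReal.coe_one, one_mul, dist_unitCube_one]
    exact PiLp.dist_apply_le x.1 y.1 _

theorem stmt4_general (n d : ℕ) (hd : 0 < d)
    (A : Set (unitCube 1)) :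
    (∃ f : Fin n → unitCube 1 → unitCube 1,
      (∀ i, IsContraction (f i)) ∧ A = ⋃ i, f i '' A) ↔
    (∃ g : Fin n → unitCube d → unitCube d,
      (∀ i, IsContraction (g i)) ∧ emb d hd '' A = ⋃ i, g i '' (emb d hd '' A)) :=
  (isIFSAttractor_image_iff (Fin n) A (isometry_emb d hd) (lipschitzWith_projL d hd)
    (leftInverse_projL_emb d hd)).symm

theorem stmt4 (n d : ℕ) (hn : 0 < n) (hd : 0 < d)
    (A : Set (unitCube 1)) (hA : IsCompact A) (hAne : A.Nonempty) :
    (∃ f : Fin n → unitCube 1 → unitCube 1,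
      (∀ i, IsContraction (f i)) ∧ A = ⋃ i, f i '' A) ↔
    (∃ g : Fin n → unitCube d → unitCube d,
      (∀ i, IsContraction (g i)) ∧ emb d hd '' A = ⋃ i, g i '' (emb d hd '' A)) :=
  stmt4_general n d hd A
end
end

section
/- For every n, d ∈ ℕ, the closure in K([0,1]^d) of the family L_n^d of attractors of IFSs of n contractions equals the closure of the family wL_n^d of attractors of systems of n weak contractions: cl(L_n^d) = cl(wL_n^d). -/
/-!
Compose each weak contraction `f i` with the homothety `h k` of ratio `1 - 1/(k+1)` towards the
centre of the cube. The maps `h k ∘ f i` are contractions, and since `h k → id` uniformly, the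
Hutchinson operators of these systems converge uniformly on the compact hyperspace to the
Hutchinson operator of `f`. The latter strictly decreases Hausdorff distances, so the attractor
`A` of `f` is its only fixed point; a convergent subsequence of the attractors of the contracting
systems must converge to a fixed point of it, hence to `A`.
-/

open Metric Set Topology Filter TopologicalSpace

noncomputable section

section Hutchinson

variable {X : Type*} [MetricSpace X] {ι : Type*}

theorem IsContraction.isWeakContraction {f : X → X} (hf : IsContraction f) :
    IsWeakContraction f := by
  obtain ⟨L, hL, hLip⟩ := hf
  intro x y hxy
  calc dist (f x) (f y) ≤ L * dist x y := hLip.dist_le_mul x y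
    _ < 1 * dist x y := by gcongr; exacts [dist_pos.2 hxy, hL]
    _ = dist x y := one_mul _

theorem IsWeakContraction.lipschitzWith_one {f : X → X} (hf : IsWeakContraction f) :
    LipschitzWith 1 f := by
  refine LipschitzWith.of_dist_le_mul fun x y => ?_
  rcases eq_or_ne x y with rfl | hxy
  · simp
  · simpa using (hf x y hxy).le

theorem IsWeakContraction.continuous {f : X → X} (hf : IsWeakContraction f) : Continuous f :=
  hf.lipschitzWith_one.continuous

theorem IsWeakContraction.dist_lt_of_dist_le {f : X → X} (hf : IsWeakContraction f) {x y : X}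
    {t : ℝ} (hxy : dist x y ≤ t) (ht : 0 < t) : dist (f x) (f y) < t := by
  rcases eq_or_ne x y with rfl | hne
  · simpa using ht
  · exact (hf x y hne).trans_le hxy

theorem IsWeakContraction.eq_of_isFixedPt {f : X → X} (hf : IsWeakContraction f) {x y : X}
    (hx : Function.IsFixedPt f x) (hy : Function.IsFixedPt f y) : x = y := by
  by_contra hne
  simpa [hx.eq, hy.eq] using hf x y hne

def attractors (P : (X → X) → Prop) (ι : Type*) : Set (NonemptyCompacts X) :=
  {A | ∃ f : ι → X → X, (∀ i, P (f i)) ∧ (A : Set X) = ⋃ i, f i '' (A : Set X)}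

theorem attractors_mono {P Q : (X → X) → Prop} (hPQ : ∀ f, P f → Q f) :
    attractors P ι ⊆ attractors Q ι := by
  rintro A ⟨f, hf, hA⟩
  exact ⟨f, fun i => hPQ _ (hf i), hA⟩

theorem hausdorffDist_iUnion_image_le {f g : ι → X → X} {K L : Set X} {r : ℝ} (hr : 0 ≤ r)
    (hKL : ∀ i, ∀ x ∈ K, ∃ y ∈ L, dist (f i x) (g i y) ≤ r)
    (hLK : ∀ i, ∀ y ∈ L, ∃ x ∈ K, dist (g i y) (f i x) ≤ r) :
    hausdorffDist (⋃ i, f i '' K) (⋃ i, g i '' L) ≤ r := by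
  refine hausdorffDist_le_of_mem_dist hr ?_ ?_
  · simp only [mem_iUnion, mem_image, forall_exists_index, and_imp]
    rintro _ i x hx rfl
    obtain ⟨y, hy, hxy⟩ := hKL i x hx
    exact ⟨g i y, ⟨i, y, hy, rfl⟩, hxy⟩
  · simp only [mem_iUnion, mem_image, forall_exists_index, and_imp]
    rintro _ i y hy rfl
    obtain ⟨x, hx, hxy⟩ := hLK i y hy
    exact ⟨f i x, ⟨i, x, hx, rfl⟩, hxy⟩

namespace TopologicalSpace.NonemptyCompacts

theorem exists_dist_le_dist {K L : NonemptyCompacts X} {x : X} (hx : x ∈ K) :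
    ∃ y ∈ L, dist x y ≤ dist K L := by
  obtain ⟨y, hy, hxy⟩ := L.isCompact.exists_infDist_eq_dist L.nonempty x
  refine ⟨y, hy, hxy ▸ infDist_le_hausdorffDist_of_mem hx ?_⟩
  exact hausdorffEDist_ne_top_of_nonempty_of_bounded K.nonempty L.nonempty
    K.isCompact.isBounded L.isCompact.isBounded

theorem dist_lt_of_forall_infDist_lt {K L : NonemptyCompacts X} {t : ℝ}
    (hKL : ∀ x ∈ K, infDist x L < t) (hLK : ∀ y ∈ L, infDist y K < t) : dist K L < t := by
  obtain ⟨x, hx, hxmax⟩ :=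
    K.isCompact.exists_isMaxOn K.nonempty (continuous_infDist_pt (L : Set X)).continuousOn
  obtain ⟨y, hy, hymax⟩ :=
    L.isCompact.exists_isMaxOn L.nonempty (continuous_infDist_pt (K : Set X)).continuousOn
  calc dist K L ≤ max (infDist x L) (infDist y K) :=
        hausdorffDist_le_of_infDist (le_max_of_le_left infDist_nonneg)
          (fun x' hx' => (hxmax hx').trans (le_max_left _ _))
          (fun y' hy' => (hymax hy').trans (le_max_right _ _))
    _ < t := max_lt (hKL x hx) (hLK y hy)

end TopologicalSpace.NonemptyCompacts

variable [Finite ι] [Nonempty ι]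

def hutchinson (f : ι → X → X) (hf : ∀ i, Continuous (f i)) (K : NonemptyCompacts X) :
    NonemptyCompacts X :=
  ⟨⟨⋃ i, f i '' K, isCompact_iUnion fun i => K.isCompact.image (hf i)⟩,
    (K.nonempty.image _).mono (subset_iUnion (fun i => f i '' K) (Classical.arbitrary ι))⟩

variable {f : ι → X → X} {hf : ∀ i, Continuous (f i)}

@[simp]
theorem coe_hutchinson (K : NonemptyCompacts X) :
    (hutchinson f hf K : Set X) = ⋃ i, f i '' K := rfl

theorem lipschitzWith_hutchinson {c : NNReal} (hc : ∀ i, LipschitzWith c (f i)) :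
    LipschitzWith c (hutchinson f hf) := by
  refine LipschitzWith.of_dist_le_mul fun K L => ?_
  refine hausdorffDist_iUnion_image_le (by positivity) (fun i x hx => ?_) (fun i y hy => ?_)
  · obtain ⟨y, hy, hxy⟩ := NonemptyCompacts.exists_dist_le_dist (L := L) hx
    exact ⟨y, hy, ((hc i).dist_le_mul x y).trans (by gcongr)⟩
  · obtain ⟨x, hx, hxy⟩ := NonemptyCompacts.exists_dist_le_dist (L := K) hy
    exact ⟨x, hx, ((hc i).dist_le_mul y x).trans (by rw [dist_comm K L]; gcongr)⟩

theorem isWeakContraction_hutchinson (hw : ∀ i, IsWeakContraction (f i)) :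
    IsWeakContraction (hutchinson f hf) := by
  have key : ∀ K L : NonemptyCompacts X, K ≠ L →
      ∀ u ∈ hutchinson f hf K, infDist u (hutchinson f hf L) < dist K L := by
    intro K L hKL u hu
    simp only [← SetLike.mem_coe, coe_hutchinson, mem_iUnion, mem_image] at hu
    obtain ⟨i, x, hx, rfl⟩ := hu
    obtain ⟨y, hy, hxy⟩ := NonemptyCompacts.exists_dist_le_dist (L := L) hx
    have hfy : f i y ∈ hutchinson f hf L := by
      rw [← SetLike.mem_coe, coe_hutchinson]
      exact mem_iUnion_of_mem i (mem_image_of_mem _ hy)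
    exact (infDist_le_dist_of_mem hfy).trans_lt ((hw i).dist_lt_of_dist_le hxy (dist_pos.2 hKL))
  intro K L hKL
  refine NonemptyCompacts.dist_lt_of_forall_infDist_lt (key K L hKL) ?_
  simpa only [dist_comm K L] using key L K hKL.symm

theorem dist_hutchinson_le {g : ι → X → X} {hg : ∀ i, Continuous (g i)} {r : ℝ}
    (hfg : ∀ i x, dist (f i x) (g i x) ≤ r) (K : NonemptyCompacts X) :
    dist (hutchinson f hf K) (hutchinson g hg K) ≤ r := by
  have hr : 0 ≤ r := dist_nonneg.trans (hfg (Classical.arbitrary ι) K.nonempty.some)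
  refine hausdorffDist_iUnion_image_le hr (fun i x hx => ⟨x, hx, hfg i x⟩)
    (fun i x hx => ⟨x, hx, dist_comm (f i x) (g i x) ▸ hfg i x⟩)

theorem tendstoUniformly_hutchinson_comp {κ : Type*} {p : Filter κ} {h : κ → X → X}
    (hh : ∀ k, Continuous (h k)) (hid : TendstoUniformly h id p) :
    TendstoUniformly (fun k => hutchinson (fun i => h k ∘ f i) (fun i => (hh k).comp (hf i)))
      (hutchinson f hf) p := by
  rw [Metric.tendstoUniformly_iff] at hid ⊢
  intro ε hε
  filter_upwards [hid (ε / 2) (half_pos hε)] with k hk K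
  exact (dist_hutchinson_le (fun i x => (hk (f i x)).le) K).trans_lt (half_lt_self hε)

end Hutchinson

theorem mem_closure_range_of_isFixedPt_of_tendstoUniformly {Y : Type*} [UniformSpace Y]
    [T2Space Y] [CompactSpace Y] [FirstCountableTopology Y] {F : Y → Y} (hF : Continuous F)
    {a : Y} (ha : ∀ c, Function.IsFixedPt F c → c = a) {G : ℕ → Y → Y}
    (hG : TendstoUniformly G F atTop) {b : ℕ → Y} (hb : ∀ k, Function.IsFixedPt (G k) (b k)) :
    a ∈ closure (range b) := by
  obtain ⟨c, -, φ, hφ, hc⟩ := isCompact_univ.tendsto_subseq fun k => mem_univ (b k)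
  have hGφ : TendstoUniformly (fun j => G (φ j)) F atTop :=
    fun u hu => hφ.tendsto_atTop.eventually (hG u hu)
  have hFc : Tendsto (fun j => G (φ j) (b (φ j))) atTop (𝓝 (F c)) :=
    hGφ.tendsto_comp hF.continuousAt hc
  simp only [fun j => (hb (φ j)).eq] at hFc
  obtain rfl := ha c (tendsto_nhds_unique hFc hc)
  exact mem_closure_of_tendsto hc (Eventually.of_forall fun j => mem_range_self _)

theorem attractors_isWeakContraction_subset_closure {X : Type*} [MetricSpace X] [CompactSpace X]
    {ι : Type*} [Finite ι] {h : ℕ → X → X} (hh : ∀ k, IsContraction (h k))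
    (hid : TendstoUniformly h id atTop) :
    attractors IsWeakContraction ι ⊆ closure (attractors (X := X) IsContraction ι) := by
  rintro A ⟨f, hf, hA⟩
  have : Nonempty ι := by
    obtain ⟨x, hx⟩ := A.nonempty
    rw [hA, mem_iUnion] at hx
    obtain ⟨i, -⟩ := hx
    exact ⟨i⟩
  choose L hL1 hL using hh
  have hLf k i : LipschitzWith (L k) (h k ∘ f i) := by
    simpa using (hL k).comp (hf i).lipschitzWith_one
  have hfc i := (hf i).continuous
  have hhc k := (hL k).continuous
  have hcontr k : ContractingWith (L k)
      (hutchinson (fun i => h k ∘ f i) fun i => (hhc k).comp (hfc i)) :=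
    ⟨hL1 k, lipschitzWith_hutchinson (hLf k)⟩
  have : Nonempty (NonemptyCompacts X) := ⟨A⟩
  let B k := (hcontr k).fixedPoint
  have hBfix k : Function.IsFixedPt _ (B k) := (hcontr k).fixedPoint_isFixedPt
  have hAfix : Function.IsFixedPt (hutchinson f hfc) A := NonemptyCompacts.ext hA.symm
  have hAB : A ∈ closure (range B) :=
    mem_closure_range_of_isFixedPt_of_tendstoUniformly
      (isWeakContraction_hutchinson hf).continuous
      (fun C hC => (isWeakContraction_hutchinson hf).eq_of_isFixedPt hC hAfix)
      (tendstoUniformly_hutchinson_comp hhc hid) hBfix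
  refine closure_mono (range_subset_iff.2 fun k => ?_) hAB
  exact ⟨fun i => h k ∘ f i, fun i => ⟨L k, hL1 k, hLf k i⟩, congrArg _ (hBfix k).symm⟩

namespace unitCube

variable {d : ℕ}

instance : CompactSpace (unitCube d) := by
  have hcube : {x : EuclideanSpace ℝ (Fin d) | ∀ i, x i ∈ Icc (0 : ℝ) 1} =
      EuclideanSpace.equiv (Fin d) ℝ ⁻¹' univ.pi fun _ => Icc 0 1 := by
    ext x
    simp [-pi_univ_Icc]
  have : IsCompact {x : EuclideanSpace ℝ (Fin d) | ∀ i, x i ∈ Icc (0 : ℝ) 1} := by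
    rw [hcube]
    exact (EuclideanSpace.equiv (Fin d) ℝ).toHomeomorph.isCompact_preimage.2
      (isCompact_univ_pi fun _ => isCompact_Icc)
  exact isCompact_iff_compactSpace.1 this

def center : unitCube d :=
  ⟨WithLp.toLp 2 fun _ => 1 / 2, fun _ => by norm_num⟩

def homothety (t : ℝ) (ht : t ∈ Icc (0 : ℝ) 1) (x : unitCube d) : unitCube d :=
  ⟨AffineMap.homothety center.1 t x.1, fun i => by
    obtain ⟨hx0, hx1⟩ := x.2 i
    simp only [AffineMap.homothety_apply, center, vsub_eq_sub, vadd_eq_add, PiLp.add_apply,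
      PiLp.smul_apply, PiLp.sub_apply, smul_eq_mul]
    constructor <;> nlinarith [ht.1, ht.2]⟩

theorem dist_homothety (t : ℝ) (ht : t ∈ Icc (0 : ℝ) 1) (x y : unitCube d) :
    dist (homothety t ht x) (homothety t ht y) = t * dist x y := by
  simp [homothety, Subtype.dist_eq, dist_eq_norm, AffineMap.homothety_apply, ← smul_sub,
    norm_smul, abs_of_nonneg ht.1]

theorem dist_homothety_self (t : ℝ) (ht : t ∈ Icc (0 : ℝ) 1) (x : unitCube d) :
    dist (homothety t ht x) x = (1 - t) * dist center x := by
  rw [Subtype.dist_eq, Subtype.dist_eq, homothety, _root_.dist_homothety_self, Real.norm_eq_abs,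
    abs_of_nonneg (sub_nonneg.2 ht.2)]

theorem isContraction_homothety (t : ℝ) (ht : t ∈ Icc (0 : ℝ) 1) (ht1 : t < 1) :
    IsContraction (homothety (d := d) t ht) := by
  refine ⟨t.toNNReal, Real.toNNReal_lt_one.2 ht1, .of_dist_le_mul fun x y => ?_⟩
  rw [Real.coe_toNNReal t ht.1, dist_homothety]

theorem exists_contractions_tendstoUniformly_id :
    ∃ h : ℕ → unitCube d → unitCube d,
      (∀ k, IsContraction (h k)) ∧ TendstoUniformly h id atTop := by
  have hpos (k : ℕ) : 0 < 1 / ((k : ℝ) + 1) := by positivity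
  have hle (k : ℕ) : 1 / ((k : ℝ) + 1) ≤ 1 :=
    div_le_one_of_le₀ (by linarith [k.cast_nonneg (α := ℝ)]) (by positivity)
  have ht (k : ℕ) : 1 - 1 / ((k : ℝ) + 1) ∈ Icc (0 : ℝ) 1 :=
    ⟨sub_nonneg.2 (hle k), by linarith [hpos k]⟩
  refine ⟨fun k => homothety _ (ht k),
    fun k => isContraction_homothety _ (ht k) (by linarith [hpos k]), ?_⟩
  rw [Metric.tendstoUniformly_iff]
  intro ε hε
  have hlim : Tendsto (fun k : ℕ => 1 / ((k : ℝ) + 1) * diam (univ : Set (unitCube d)))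
      atTop (𝓝 0) := by
    simpa using tendsto_one_div_add_atTop_nhds_zero_nat.mul_const (diam (univ : Set (unitCube d)))
  filter_upwards [hlim.eventually (gt_mem_nhds hε)] with k hk x
  calc dist x (homothety _ (ht k) x) = 1 / ((k : ℝ) + 1) * dist center x := by
        rw [dist_comm, dist_homothety_self, sub_sub_cancel]
    _ ≤ 1 / ((k : ℝ) + 1) * diam (univ : Set (unitCube d)) := by
        gcongr
        exact dist_le_diam_of_mem isCompact_univ.isBounded (mem_univ _) (mem_univ _)
    _ < ε := hk

end unitCube

theorem stmt11_general (n d : ℕ) :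
    closure (Ld n d) = closure (wLd n d) := by
  change closure (attractors IsContraction (Fin n)) =
    closure (attractors IsWeakContraction (Fin n))
  obtain ⟨h, hh, hid⟩ := unitCube.exists_contractions_tendstoUniformly_id (d := d)
  refine (closure_mono (attractors_mono fun _ => IsContraction.isWeakContraction)).antisymm ?_
  exact closure_minimal (attractors_isWeakContraction_subset_closure hh hid) isClosed_closure

theorem stmt11 (n d : ℕ) (hn : 0 < n) (hd : 0 < d) :
    closure (Ld n d) = closure (wLd n d) :=
  stmt11_general n d
end
end

section
/- For every d ∈ ℕ there exists a compact set X ⊆ [0,1]^d that is an attractor of a system of 2 weak contractions but is not an attractor of any (finite) IFS of genuine contractions: wL_2^d \ IFS^d ≠ ∅. -/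
open Metric Set Topology Filter TopologicalSpace

noncomputable section

/-!
The set `X = {0} ∪ {1 / log₂ (m + 2) | m ∈ ℕ}`, placed on a coordinate axis of the cube, is the
attractor of the constant map to `1` and of `r ↦ 1 / log₂ (2 ^ (1 / r) + 1)` (applied to the
coordinate), which sends each point of the sequence to the next one and is a weak contraction.

Suppose `X` is covered by its images under contractions `f₁, …, fₙ` with common Lipschitz
constant `L < 1`. Maps not fixing `0` send all of `X` far from `0`, so every `y ∈ X` close to `0`
is some `fᵢ s` with `s ∈ X` and `dist y 0 ≤ L * dist s 0`. Counting the points of `X` at distance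
at least `ε` from `0` gives `N ε ≤ C + n * N (ε / L)`, which is impossible since
`N ε ≈ 2 ^ (1 / ε)` while `n * N (ε / L) ≈ n * 2 ^ (L / ε)`.
-/

namespace WeakIFS

open Real
open scoped NNReal

def softplus (s : ℝ) : ℝ := log (exp s + 1)

lemma lt_softplus (s : ℝ) : s < softplus s := by
  calc s = log (exp s) := (log_exp s).symm
    _ < softplus s := log_lt_log (exp_pos s) (lt_add_one _)

lemma softplus_pos (s : ℝ) : 0 < softplus s :=
  log_pos (lt_add_of_pos_left 1 (exp_pos s))

lemma softplus_lt_softplus {s t : ℝ} (hst : s < t) : softplus s < softplus t :=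
  log_lt_log (by positivity) (by gcongr)

lemma softplus_sub_softplus_lt {s t : ℝ} (hst : s < t) : softplus t - softplus s < t - s := by
  have hexp : exp t + 1 < exp (t - s) * (exp s + 1) := by
    rw [mul_add, mul_one, ← exp_add, sub_add_cancel, add_lt_add_iff_left, one_lt_exp_iff]
    linarith
  have := log_lt_log (by positivity) hexp
  rw [log_mul (by positivity) (by positivity), log_exp] at this
  exact sub_lt_iff_lt_add.2 this

def invLog (m : ℕ) : ℝ := log 2 / log (m + 2)

/-- In the coordinate `t = 2 ^ (1 / r)` this is `t ↦ t + 1`; its orbit of `1` is `invLog`. -/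
def invLogShift (r : ℝ) : ℝ := if r ≤ 0 then 0 else log 2 / softplus (log 2 / r)

lemma log_natCast_add_two_pos (m : ℕ) : 0 < log ((m : ℝ) + 2) :=
  log_pos (by linarith [m.cast_nonneg (α := ℝ)])

lemma invLog_pos (m : ℕ) : 0 < invLog m := div_pos (log_pos one_lt_two) (log_natCast_add_two_pos m)

lemma invLog_zero : invLog 0 = 1 := by
  simp [invLog, (log_pos one_lt_two).ne']

lemma invLog_strictAnti : StrictAnti invLog := fun m p hmp ↦
  div_lt_div_of_pos_left (log_pos one_lt_two) (log_natCast_add_two_pos m)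
    (log_lt_log (by positivity) (by gcongr))

lemma invLog_le_one (m : ℕ) : invLog m ≤ 1 :=
  invLog_zero ▸ invLog_strictAnti.antitone m.zero_le

lemma tendsto_invLog : Tendsto invLog atTop (𝓝 0) :=
  tendsto_const_nhds.div_atTop <| tendsto_log_atTop.comp <|
    tendsto_atTop_add_const_right _ 2 tendsto_natCast_atTop_atTop

lemma invLog_le_mul_invLog {L : ℝ} {M m : ℕ} (h : invLog M ≤ L * invLog m) :
    (m : ℝ) + 2 ≤ ((M : ℝ) + 2) ^ L := by
  have hM := log_natCast_add_two_pos M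
  have hm := log_natCast_add_two_pos m
  have hlog : log ((m : ℝ) + 2) ≤ L * log ((M : ℝ) + 2) := by
    rw [invLog, invLog, mul_div_assoc', div_le_div_iff₀ hM hm] at h
    nlinarith [log_pos one_lt_two]
  rw [rpow_def_of_pos (by positivity), ← exp_log (by positivity : (0 : ℝ) < m + 2)]
  exact exp_le_exp.2 (by linarith)

lemma invLogShift_zero : invLogShift 0 = 0 := if_pos le_rfl

lemma invLogShift_of_pos {r : ℝ} (hr : 0 < r) :
    invLogShift r = log 2 / softplus (log 2 / r) := if_neg hr.not_ge

lemma invLogShift_invLog (m : ℕ) : invLogShift (invLog m) = invLog (m + 1) := by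
  rw [invLogShift_of_pos (invLog_pos m), invLog, div_div_cancel₀ (log_pos one_lt_two).ne',
    softplus, exp_log (by positivity), invLog]
  push_cast
  ring_nf

lemma invLogShift_pos {r : ℝ} (hr : 0 < r) : 0 < invLogShift r := by
  rw [invLogShift_of_pos hr]
  exact div_pos (log_pos one_lt_two) (softplus_pos _)

lemma invLogShift_lt_self {r : ℝ} (hr : 0 < r) : invLogShift r < r := by
  have hc := log_pos one_lt_two
  rw [invLogShift_of_pos hr]
  calc log 2 / softplus (log 2 / r) < log 2 / (log 2 / r) :=
        div_lt_div_of_pos_left hc (by positivity) (lt_softplus _)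
    _ = r := div_div_cancel₀ hc.ne'

lemma invLogShift_mem_Icc {r : ℝ} (hr : r ∈ Icc (0 : ℝ) 1) : invLogShift r ∈ Icc (0 : ℝ) 1 := by
  rcases hr.1.eq_or_lt with h | h
  · rw [← h, invLogShift_zero]; exact left_mem_Icc.2 zero_le_one
  · exact ⟨(invLogShift_pos h).le, (invLogShift_lt_self h).le.trans hr.2⟩

/-- With `u = log 2 / b < v = log 2 / a`, this is `1/A - 1/B < 1/u - 1/v` for
`A = softplus u`, `B = softplus v`, which holds since `0 < B - A < v - u` and `u v < A B`. -/
lemma invLogShift_sub_lt {a b : ℝ} (ha : 0 < a) (hab : a < b) :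
    0 < invLogShift b - invLogShift a ∧ invLogShift b - invLogShift a < b - a := by
  have hc := log_pos one_lt_two
  have hb := ha.trans hab
  set u := log 2 / b
  set v := log 2 / a
  have hu : 0 < u := by positivity
  have huv : u < v := div_lt_div_of_pos_left hc ha hab
  have hA := softplus_pos u
  have hB := softplus_pos v
  have hAB := softplus_lt_softplus huv
  have hBA := softplus_sub_softplus_lt huv
  have hprod : u * v < softplus u * softplus v :=
    mul_lt_mul'' (lt_softplus u) (lt_softplus v) hu.le (hu.trans huv).le
  have hba : b - a = log 2 * (v - u) / (u * v) := by
    simp only [u, v]; field_simp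
  have hdiff : log 2 / softplus u - log 2 / softplus v
      = log 2 * (softplus v - softplus u) / (softplus u * softplus v) := by
    field_simp
  rw [invLogShift_of_pos ha, invLogShift_of_pos hb, hdiff, hba]
  refine ⟨by have := sub_pos.2 hAB; positivity, ?_⟩
  calc log 2 * (softplus v - softplus u) / (softplus u * softplus v)
      < log 2 * (v - u) / (softplus u * softplus v) := by gcongr
    _ < log 2 * (v - u) / (u * v) := by
      have := sub_pos.2 huv
      gcongr

lemma abs_invLogShift_sub_lt {a b : ℝ} (ha : 0 ≤ a) (hb : 0 ≤ b) (hab : a ≠ b) :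
    |invLogShift a - invLogShift b| < |a - b| := by
  wlog hlt : a < b generalizing a b
  · rw [abs_sub_comm, abs_sub_comm a]
    exact this hb ha hab.symm (hab.lt_or_gt.resolve_left hlt)
  rw [abs_sub_comm, abs_sub_comm a, abs_of_pos (sub_pos.2 hlt)]
  rcases ha.eq_or_lt with rfl | ha
  · rw [invLogShift_zero, sub_zero, sub_zero, abs_of_pos (invLogShift_pos hlt)]
    exact invLogShift_lt_self hlt
  · obtain ⟨hpos, hlt'⟩ := invLogShift_sub_lt ha hlt
    exact (abs_of_pos hpos).trans_lt hlt'

def invLogShiftIcc (r : Icc (0 : ℝ) 1) : Icc (0 : ℝ) 1 :=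
  ⟨invLogShift r, invLogShift_mem_Icc r.2⟩

lemma isWeakContraction_invLogShiftIcc : IsWeakContraction invLogShiftIcc := fun r s hrs ↦ by
  simpa only [invLogShiftIcc, Subtype.dist_eq, Real.dist_eq] using
    abs_invLogShift_sub_lt r.2.1 s.2.1 (Subtype.coe_ne_coe.2 hrs)

lemma IsWeakContraction.isometry_comp_comp {E Y : Type*} [MetricSpace E] [MetricSpace Y]
    {g : Y → Y} {e : Y → E} {p : E → Y} (hg : IsWeakContraction g) (he : Isometry e)
    (hp : LipschitzWith 1 p) : IsWeakContraction (e ∘ g ∘ p) := fun x y hxy ↦ by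
  simp only [Function.comp_apply, he.dist_eq]
  rcases eq_or_ne (p x) (p y) with h | h
  · rw [h, dist_self]; exact dist_pos.2 hxy
  · exact (hg _ _ h).trans_le (by simpa using hp.dist_le_mul x y)

lemma isWeakContraction_const {E : Type*} [MetricSpace E] (c : E) :
    IsWeakContraction (fun _ : E ↦ c) := fun _ _ hxy ↦ by
  simpa using dist_pos.2 hxy

lemma insert_range_eq_iUnion_fin_two {α : Type*} {a : α} {u : ℕ → α} {f : Fin 2 → α → α}
    (hfa : f 0 a = a) (hfu : ∀ m, f 0 (u m) = u (m + 1)) (hf₁ : ∀ x, f 1 x = u 0) :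
    insert a (range u) = ⋃ j, f j '' insert a (range u) := by
  ext y
  simp only [mem_iUnion, Fin.exists_fin_two, mem_image, mem_insert_iff, mem_range]
  constructor
  · rintro (hy | ⟨_ | m, rfl⟩)
    · exact .inl ⟨a, .inl rfl, hfa.trans hy.symm⟩
    · exact .inr ⟨a, .inl rfl, hf₁ a⟩
    · exact .inl ⟨u m, .inr ⟨m, rfl⟩, hfu m⟩
  · rintro (⟨x, hx | ⟨m, rfl⟩, rfl⟩ | ⟨x, -, rfl⟩)
    · exact .inl (by rw [hx, hfa])
    · exact .inr ⟨m + 1, (hfu m).symm⟩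
    · exact .inr ⟨0, (hf₁ x).symm⟩

section LevelSets

variable {E ι : Type*} [PseudoMetricSpace E] {f : ι → E → E} {L : ℝ≥0} {X : Set E}

lemma exists_pos_forall_dist_lt_exists_preimage [Finite ι] (hf : ∀ i, LipschitzWith L (f i))
    (a : E) (hX : X ⊆ ⋃ i, f i '' X) :
    ∃ δ > 0, ∀ y ∈ X, dist y a < δ → ∃ i, ∃ s ∈ X, f i s = y ∧ dist y a ≤ L * dist s a := by
  have hδ : ∀ᶠ δ in 𝓝[>] (0 : ℝ), ∀ i, dist (f i a) a = 0 ∨ 2 * δ ≤ dist (f i a) a := by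
    refine eventually_all.2 fun i ↦ ?_
    rcases (dist_nonneg : 0 ≤ dist (f i a) a).eq_or_lt with h | h
    · exact .of_forall fun _ ↦ .inl h.symm
    · filter_upwards [nhdsWithin_le_nhds (eventually_lt_nhds (half_pos h))] with δ hδ
      exact .inr (by linarith)
  obtain ⟨δ, hfar, hpos⟩ := (hδ.and self_mem_nhdsWithin).exists
  refine ⟨δ, hpos, fun y hy hya ↦ ?_⟩
  obtain ⟨i, s, hs, rfl⟩ := mem_iUnion.1 (hX hy)
  refine ⟨i, s, hs, rfl, ?_⟩
  have hnear : dist (f i s) a ≤ dist (f i s) (f i a) := by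
    rcases hfar i with h | h
    · linarith [dist_triangle (f i s) (f i a) a]
    · linarith [dist_triangle (f i a) (f i s) a, dist_comm (f i a) (f i s)]
  exact hnear.trans ((hf i).dist_le_mul s a)

lemma exists_pos_encard_sep_le [Fintype ι] (hf : ∀ i, LipschitzWith L (f i)) (a : E)
    (hX : X ⊆ ⋃ i, f i '' X) :
    ∃ δ > 0, ∀ ε, {y ∈ X | ε ≤ dist y a}.encard ≤
      {y ∈ X | δ ≤ dist y a}.encard + Fintype.card ι * {s ∈ X | ε ≤ L * dist s a}.encard := by
  obtain ⟨δ, hδ, hpre⟩ := exists_pos_forall_dist_lt_exists_preimage hf a hX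
  refine ⟨δ, hδ, fun ε ↦ ?_⟩
  have hsub : {y ∈ X | ε ≤ dist y a} ⊆
      {y ∈ X | δ ≤ dist y a} ∪ ⋃ i, f i '' {s ∈ X | ε ≤ L * dist s a} := by
    rintro y ⟨hy, hεy⟩
    rcases le_or_gt δ (dist y a) with hδy | hδy
    · exact .inl ⟨hy, hδy⟩
    · obtain ⟨i, s, hs, rfl, hle⟩ := hpre y hy hδy
      exact .inr (mem_iUnion.2 ⟨i, s, ⟨hs, hεy.trans hle⟩, rfl⟩)
  calc _ ≤ _ := encard_le_encard hsub
    _ ≤ _ := encard_union_le _ _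
    _ ≤ _ := by
      gcongr
      refine (encard_iUnion_le_of_fintype _).trans ((Finset.sum_le_sum fun i _ ↦
        encard_image_le (f i) _).trans ?_)
      simp

end LevelSets

lemma exists_nat_add_mul_rpow_lt {L : ℝ} (hL : L < 1) (C c : ℝ) :
    ∃ M : ℕ, C + c * ((M : ℝ) + 2) ^ L < M + 1 := by
  have hlim : Tendsto (fun x : ℝ ↦ (C + 1) * x⁻¹ + c * x ^ (-(1 - L))) atTop (𝓝 0) := by
    simpa using (tendsto_inv_atTop_zero.const_mul (C + 1)).add
      ((tendsto_rpow_neg_atTop (sub_pos.2 hL)).const_mul c)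
  have hev : ∀ᶠ x : ℝ in atTop, C + 1 + c * x ^ L < x := by
    filter_upwards [hlim.eventually (gt_mem_nhds one_pos), eventually_gt_atTop 0] with x hx hx0
    have hpow : x ^ L = x * x ^ (-(1 - L)) := by
      conv_lhs => rw [show L = 1 + -(1 - L) by ring, Real.rpow_add hx0, Real.rpow_one]
    calc C + 1 + c * x ^ L = x * ((C + 1) * x⁻¹ + c * x ^ (-(1 - L))) := by
          rw [hpow]; field_simp
      _ < x * 1 := by gcongr
      _ = x := mul_one x
  obtain ⟨M, hM⟩ := ((tendsto_atTop_add_const_right _ 2 tendsto_natCast_atTop_atTop).eventually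
    hev).exists
  exact ⟨M, by linarith⟩

lemma encard_sep_insert_range {E : Type*} [PseudoMetricSpace E] {a : E} {u : ℕ → E}
    {r : ℕ → ℝ} (hu : ∀ m, dist (u m) a = r m) (hr : Function.Injective r) {P : ℝ → Prop}
    (hP : ¬ P 0) : {y ∈ insert a (range u) | P (dist y a)}.encard = {m | P (r m)}.encard := by
  have hinj : Function.Injective u := fun m p h ↦ hr (by rw [← hu, ← hu, h])
  have hset : {y ∈ insert a (range u) | P (dist y a)} = u '' {m | P (r m)} := by
    ext y
    simp only [mem_insert_iff, mem_range, mem_image, mem_ofPred_eq]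
    constructor
    · rintro ⟨rfl | ⟨m, rfl⟩, hy⟩
      · exact absurd (dist_self y ▸ hy) hP
      · exact ⟨m, hu m ▸ hy, rfl⟩
    · rintro ⟨m, hm, rfl⟩
      exact ⟨.inr ⟨m, rfl⟩, (hu m).symm ▸ hm⟩
  rw [hset, hinj.encard_image]

theorem not_subset_iUnion_image_insert_range {E ι : Type*} [PseudoMetricSpace E] [Finite ι]
    {a : E} {u : ℕ → E} (hu : ∀ m, dist (u m) a = invLog m) {f : ι → E → E} {L : ℝ≥0}
    (hL : L < 1) (hf : ∀ i, LipschitzWith L (f i)) :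
    ¬ insert a (range u) ⊆ ⋃ i, f i '' insert a (range u) := by
  intro hX
  have := Fintype.ofFinite ι
  obtain ⟨δ, hδ, hcount⟩ := exists_pos_encard_sep_le hf a hX
  obtain ⟨M₀, hM₀⟩ := (tendsto_invLog.eventually (gt_mem_nhds hδ)).exists
  obtain ⟨M, hM⟩ := exists_nat_add_mul_rpow_lt (L := L) hL M₀ (Fintype.card ι)
  set K := ⌊((M : ℝ) + 2) ^ (L : ℝ)⌋₊
  have hε := invLog_pos M
  have key := hcount (invLog M)
  rw [encard_sep_insert_range hu invLog_strictAnti.injective (P := (invLog M ≤ ·)) hε.not_ge,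
    encard_sep_insert_range hu invLog_strictAnti.injective (P := (δ ≤ ·)) hδ.not_ge,
    encard_sep_insert_range hu invLog_strictAnti.injective (P := (invLog M ≤ L * ·))
      (by simpa using hε.not_ge)] at key
  have hlevel : {m | invLog M ≤ invLog m} = {m | m < M + 1} := by
    ext m
    simp [invLog_strictAnti.le_iff_ge]
  have hnear : {m | δ ≤ invLog m} ⊆ {m | m < M₀} := fun m hm ↦ by
    show m < M₀
    by_contra! h
    exact (hm.trans (invLog_strictAnti.antitone h)).not_gt hM₀
  have hfar : {m | invLog M ≤ L * invLog m} ⊆ {m | m < K} := fun m hm ↦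
    Nat.le_floor (by push_cast; linarith [invLog_le_mul_invLog hm])
  have hcard : ((M + 1 : ℕ) : ℕ∞) ≤ M₀ + Fintype.card ι * K := by
    rw [hlevel, Nat.encard_range] at key
    refine key.trans ?_
    rw [← Nat.encard_range M₀, ← Nat.encard_range K]
    gcongr
  have hcardR : ((M : ℝ) + 1) ≤ M₀ + Fintype.card ι * ((M : ℝ) + 2) ^ (L : ℝ) := by
    have : M + 1 ≤ M₀ + Fintype.card ι * K := by exact_mod_cast hcard
    calc ((M : ℝ) + 1) ≤ M₀ + Fintype.card ι * K := by exact_mod_cast this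
      _ ≤ _ := by gcongr; exact Nat.floor_le (by positivity)
  linarith

lemma exists_lt_one_forall_lipschitzWith {E ι : Type*} [MetricSpace E] [Fintype ι]
    {f : ι → E → E} (hf : ∀ i, IsContraction (f i)) :
    ∃ L : ℝ≥0, L < 1 ∧ ∀ i, LipschitzWith L (f i) := by
  choose K hK hKf using hf
  exact ⟨Finset.univ.sup K, (Finset.sup_lt_iff zero_lt_one).2 fun i _ ↦ hK i,
    fun i ↦ (hKf i).weaken (Finset.le_sup (Finset.mem_univ i))⟩

variable {d : ℕ} (i : Fin d)

def axisPoint (r : Icc (0 : ℝ) 1) : unitCube d :=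
  ⟨EuclideanSpace.single i (r : ℝ), fun j ↦ by
    rw [PiLp.single_apply]
    split_ifs
    exacts [r.2, left_mem_Icc.2 zero_le_one]⟩

lemma isometry_axisPoint : Isometry (axisPoint i) :=
  Isometry.of_dist_eq fun r s ↦ by simp [axisPoint, Subtype.dist_eq]

def coordIcc (x : unitCube d) : Icc (0 : ℝ) 1 := ⟨x.1 i, x.2 i⟩

lemma lipschitzWith_coordIcc : LipschitzWith 1 (coordIcc i) :=
  LipschitzWith.of_dist_le_mul fun x y ↦ by
    simpa [coordIcc, Subtype.dist_eq] using PiLp.dist_apply_le x.1 y.1 i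

lemma coordIcc_axisPoint (r : Icc (0 : ℝ) 1) : coordIcc i (axisPoint i r) = r := by
  ext; simp [coordIcc, axisPoint]

lemma invLog_mem_Icc (m : ℕ) : invLog m ∈ Icc (0 : ℝ) 1 := ⟨(invLog_pos m).le, invLog_le_one m⟩

def invLogPoint (m : ℕ) : unitCube d := axisPoint i ⟨invLog m, invLog_mem_Icc m⟩

lemma dist_invLogPoint (m : ℕ) : dist (invLogPoint i m) (axisPoint i 0) = invLog m := by
  rw [invLogPoint, (isometry_axisPoint i).dist_eq, Subtype.dist_eq]
  simp [abs_of_pos (invLog_pos m)]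

lemma tendsto_invLogPoint : Tendsto (invLogPoint i) atTop (𝓝 (axisPoint i 0)) :=
  tendsto_iff_dist_tendsto_zero.2 <| by simpa only [dist_invLogPoint] using tendsto_invLog

def invLogCompact : NonemptyCompacts (unitCube d) where
  carrier := insert (axisPoint i 0) (range (invLogPoint i))
  isCompact' := (tendsto_invLogPoint i).isCompact_insert_range
  nonempty' := insert_nonempty _ _

lemma invLogCompact_mem_wLd : invLogCompact i ∈ wLd 2 d := by
  refine ⟨![axisPoint i ∘ invLogShiftIcc ∘ coordIcc i, fun _ ↦ invLogPoint i 0], ?_, ?_⟩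
  · refine Fin.forall_fin_two.2 ⟨?_, isWeakContraction_const _⟩
    exact IsWeakContraction.isometry_comp_comp isWeakContraction_invLogShiftIcc
      (isometry_axisPoint i) (lipschitzWith_coordIcc i)
  · refine insert_range_eq_iUnion_fin_two ?_ (fun m ↦ ?_) fun _ ↦ rfl
    · simp [coordIcc_axisPoint, invLogShiftIcc, invLogShift_zero]
    · simp [invLogPoint, coordIcc_axisPoint, invLogShiftIcc, invLogShift_invLog]

end WeakIFS

theorem stmt15 (d : ℕ) (hd : 0 < d) :
    ∃ X : NonemptyCompacts (unitCube d), X ∈ wLd 2 d ∧ X ∉ IFSd d := by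
  refine ⟨WeakIFS.invLogCompact ⟨0, hd⟩, WeakIFS.invLogCompact_mem_wLd _, ?_⟩
  simp only [IFSd, mem_iUnion, not_exists]
  rintro n ⟨f, hf, hX⟩
  obtain ⟨L, hL, hfL⟩ := WeakIFS.exists_lt_one_forall_lipschitzWith hf
  exact WeakIFS.not_subset_iUnion_image_insert_range (WeakIFS.dist_invLogPoint _) hL hfL hX.subset
end
end

section
/- Let X = {0} ∪ {x_n : n ∈ ℕ} ⊆ [0,1] where (x_n) is strictly decreasing to 0 with x_n - x_{n+1} strictly decreasing. Then there is a weak contraction g : [0,1] → [0,1] with g(x_n) = x_{n+1} for all n and g(0) = 0, and hence X is an attractor of a system of two weak contractions (g together with the constant map with value x_1). -/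
/-!
Let `g` be the piecewise-affine map with `g 0 = 0`, `g (x n) = x (n + 1)`, constant `x 1` on
`[x 0, ∞)`. On `[x (m + 1), x m]` it has slope `gap (m + 1) / gap m ∈ (0, 1)`, where
`gap n = x n - x (n + 1)`, so both `g` and `t ↦ t - g t` are increasing there, the latter
strictly. Across pieces this persists because on the `m`-th piece `g` takes values in
`[x (m + 2), x (m + 1))` and `t - g t` in `[gap (m + 1), gap m)`, and these ranges are ordered
like the pieces since `x` and `gap` decrease. A map `g` with `g` and `id - g` increasing satisfies
`|g a - g b| < |a - b|`.
-/

open Metric Set Topology Filter TopologicalSpace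

noncomputable section

theorem singleton_union_range_eq_image_union_image_const {α : Type*} {a : α} {x : ℕ → α}
    {g : α → α} (ha : g a = a) (hg : ∀ n, g (x n) = x (n + 1)) :
    ({a} ∪ range x : Set α) = g '' ({a} ∪ range x) ∪ (fun _ => x 0) '' ({a} ∪ range x) := by
  apply Subset.antisymm
  · rintro y (rfl | ⟨n, rfl⟩)
    · exact Or.inl ⟨y, Or.inl rfl, ha⟩
    · cases n with
      | zero => exact Or.inr ⟨a, Or.inl rfl, rfl⟩
      | succ m => exact Or.inl ⟨x m, Or.inr ⟨m, rfl⟩, hg m⟩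
  · rintro y (⟨z, rfl | ⟨n, rfl⟩, rfl⟩ | ⟨z, -, rfl⟩)
    · exact Or.inl ha
    · exact Or.inr ⟨n + 1, (hg n).symm⟩
    · exact Or.inr ⟨0, rfl⟩

theorem abs_sub_lt_abs_sub_of_monotoneOn_of_strictMonoOn {s : Set ℝ} {g : ℝ → ℝ}
    (hg : MonotoneOn g s) (hsub : StrictMonoOn (fun t => t - g t) s)
    {a b : ℝ} (ha : a ∈ s) (hb : b ∈ s) (hab : a ≠ b) : |g a - g b| < |a - b| := by
  wlog hlt : a < b generalizing a b
  · rw [abs_sub_comm, abs_sub_comm a]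
    exact this hb ha hab.symm (hab.lt_or_gt.resolve_left hlt)
  have hmono := hg ha hb hlt.le
  have hstrict := hsub ha hb hlt
  rw [abs_sub_comm, abs_of_nonneg (sub_nonneg.2 hmono), abs_sub_comm, abs_of_pos (sub_pos.2 hlt)]
  linarith

theorem pos_of_strictAnti_of_tendsto_zero {x : ℕ → ℝ} (hanti : StrictAnti x)
    (hlim : Tendsto x atTop (𝓝 0)) (n : ℕ) : 0 < x n :=
  (hanti.antitone.le_of_tendsto hlim (n + 1)).trans_lt (hanti n.lt_succ_self)

namespace DecreasingSeq

def gap (x : ℕ → ℝ) (n : ℕ) : ℝ := x n - x (n + 1)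

open Classical in
/-- Affine from `(x (m + 1), x (m + 2))` to `(x m, x (m + 1))` on each `[x (m + 1), x m)`; for
positive decreasing `x` the `else` branch is reached exactly when `t ≤ 0` or `x 0 ≤ t`. -/
def shiftInterp (x : ℕ → ℝ) (t : ℝ) : ℝ :=
  if h : ∃ m, t ∈ Ico (x (m + 1)) (x m) then
    x (h.choose + 2) + gap x (h.choose + 1) / gap x h.choose * (t - x (h.choose + 1))
  else if t ≤ 0 then 0 else x 1

variable {x : ℕ → ℝ} {t : ℝ} {m : ℕ}

theorem gap_pos (hanti : StrictAnti x) (n : ℕ) : 0 < gap x n :=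
  sub_pos.2 (hanti n.lt_succ_self)

theorem eq_of_mem_Ico_of_mem_Ico (hanti : Antitone x) {k : ℕ}
    (hm : t ∈ Ico (x (m + 1)) (x m)) (hk : t ∈ Ico (x (k + 1)) (x k)) : m = k := by
  have key : ∀ {i j : ℕ}, t ∈ Ico (x (i + 1)) (x i) → t ∈ Ico (x (j + 1)) (x j) → ¬ i < j :=
    fun hi hj hij => (hj.2.trans_le (hanti hij)).not_ge hi.1
  exact le_antisymm (not_lt.1 (key hk hm)) (not_lt.1 (key hm hk))

theorem exists_mem_Ico (hlim : Tendsto x atTop (𝓝 0)) (ht0 : 0 < t) (ht : t < x 0) :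
    ∃ m, t ∈ Ico (x (m + 1)) (x m) := by
  classical
  have hex : ∃ n, x n ≤ t := ((hlim.eventually (gt_mem_nhds ht0)).exists).imp fun _ => le_of_lt
  obtain ⟨m, hm⟩ : ∃ m, Nat.find hex = m + 1 :=
    Nat.exists_eq_succ_of_ne_zero fun h => (h ▸ Nat.find_spec hex).not_gt ht
  exact ⟨m, hm ▸ Nat.find_spec hex, not_le.1 (Nat.find_min hex (by omega))⟩

theorem shiftInterp_of_mem_Ico (hanti : Antitone x) (h : t ∈ Ico (x (m + 1)) (x m)) :
    shiftInterp x t = x (m + 2) + gap x (m + 1) / gap x m * (t - x (m + 1)) := by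
  have hex : ∃ m, t ∈ Ico (x (m + 1)) (x m) := ⟨m, h⟩
  rw [shiftInterp, dif_pos hex, eq_of_mem_Ico_of_mem_Ico hanti hex.choose_spec h]

theorem shiftInterp_of_nonpos (hpos : ∀ n, 0 < x n) (ht : t ≤ 0) : shiftInterp x t = 0 := by
  have hex : ¬ ∃ m, t ∈ Ico (x (m + 1)) (x m) := fun ⟨m, hm⟩ => (ht.trans_lt (hpos _)).not_ge hm.1
  rw [shiftInterp, dif_neg hex, if_pos ht]

theorem shiftInterp_of_le (hanti : Antitone x) (hpos : ∀ n, 0 < x n) (ht : x 0 ≤ t) :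
    shiftInterp x t = x 1 := by
  have hex : ¬ ∃ m, t ∈ Ico (x (m + 1)) (x m) :=
    fun ⟨m, hm⟩ => (hm.2.trans_le (hanti m.zero_le)).not_ge ht
  rw [shiftInterp, dif_neg hex, if_neg (not_le.2 ((hpos 0).trans_le ht))]

theorem shiftInterp_apply (hanti : StrictAnti x) (hpos : ∀ n, 0 < x n) (n : ℕ) :
    shiftInterp x (x n) = x (n + 1) := by
  cases n with
  | zero => exact shiftInterp_of_le hanti.antitone hpos le_rfl
  | succ m =>
    rw [shiftInterp_of_mem_Ico hanti.antitone ⟨le_rfl, hanti m.lt_succ_self⟩]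
    ring

theorem div_gap_mem_Ioo (hanti : StrictAnti x) (hgap : StrictAnti (gap x)) (m : ℕ) :
    gap x (m + 1) / gap x m ∈ Ioo 0 1 :=
  ⟨div_pos (gap_pos hanti (m + 1)) (gap_pos hanti m),
    (div_lt_one (gap_pos hanti m)).2 (hgap m.lt_succ_self)⟩

theorem mem_Ico_shiftInterp_and_sub (hanti : StrictAnti x) (hgap : StrictAnti (gap x))
    (h : t ∈ Ico (x (m + 1)) (x m)) :
    shiftInterp x t ∈ Ico (x (m + 2)) (x (m + 1)) ∧
      t - shiftInterp x t ∈ Ico (gap x (m + 1)) (gap x m) := by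
  rw [shiftInterp_of_mem_Ico hanti.antitone h]
  obtain ⟨hr0, hr1⟩ := div_gap_mem_Ioo hanti hgap m
  have hrD : gap x (m + 1) / gap x m * gap x m = gap x (m + 1) :=
    div_mul_cancel₀ _ (gap_pos hanti m).ne'
  set r := gap x (m + 1) / gap x m
  have hu0 : 0 ≤ t - x (m + 1) := sub_nonneg.2 h.1
  have huD : t - x (m + 1) < gap x m := by rw [gap]; linarith [h.2]
  have hgap_succ : gap x (m + 1) = x (m + 1) - x (m + 2) := rfl
  have h1 := mul_nonneg hr0.le hu0
  have h2 := mul_lt_mul_of_pos_left huD hr0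
  have h3 := mul_nonneg (sub_pos.2 hr1).le hu0
  have h4 := mul_lt_mul_of_pos_left huD (sub_pos.2 hr1)
  refine ⟨⟨?_, ?_⟩, ?_, ?_⟩ <;> linarith

theorem shiftInterp_le_and_sub_lt_of_mem_Ico (hanti : StrictAnti x) (hgap : StrictAnti (gap x))
    {a b : ℝ} (ha : a ∈ Ico (x (m + 1)) (x m)) (hb : b ∈ Ico (x (m + 1)) (x m)) (hab : a < b) :
    shiftInterp x a ≤ shiftInterp x b ∧ a - shiftInterp x a < b - shiftInterp x b := by
  rw [shiftInterp_of_mem_Ico hanti.antitone ha, shiftInterp_of_mem_Ico hanti.antitone hb]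
  obtain ⟨hr0, hr1⟩ := div_gap_mem_Ioo hanti hgap m
  refine ⟨by gcongr, ?_⟩
  nlinarith [mul_lt_mul_of_pos_left hab (sub_pos.2 hr1)]

theorem shiftInterp_lt_and_sub_lt (hanti : StrictAnti x) (hgap : StrictAnti (gap x))
    (hlim : Tendsto x atTop (𝓝 0)) (ht0 : 0 ≤ t) (ht : t < x m) :
    shiftInterp x t < x (m + 1) ∧ t - shiftInterp x t < gap x m := by
  have hpos := pos_of_strictAnti_of_tendsto_zero hanti hlim
  rcases ht0.eq_or_lt with rfl | ht0
  · rw [shiftInterp_of_nonpos hpos le_rfl, sub_zero]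
    exact ⟨hpos _, gap_pos hanti m⟩
  obtain ⟨k, hk⟩ := exists_mem_Ico hlim ht0 (ht.trans_le (hanti.antitone m.zero_le))
  have hmk : m ≤ k := by
    by_contra! hkm
    exact (ht.trans_le (hanti.antitone hkm)).not_ge hk.1
  obtain ⟨hg, hsub⟩ := mem_Ico_shiftInterp_and_sub hanti hgap hk
  exact ⟨hg.2.trans_le (hanti.antitone (by omega)), hsub.2.trans_le (hgap.antitone hmk)⟩

theorem shiftInterp_le_and_sub_lt (hanti : StrictAnti x) (hgap : StrictAnti (gap x))
    (hlim : Tendsto x atTop (𝓝 0)) {a b : ℝ} (ha : 0 ≤ a) (hab : a < b) :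
    shiftInterp x a ≤ shiftInterp x b ∧ a - shiftInterp x a < b - shiftInterp x b := by
  have hpos := pos_of_strictAnti_of_tendsto_zero hanti hlim
  rcases le_or_gt (x 0) b with hb | hb
  · rw [shiftInterp_of_le hanti.antitone hpos hb]
    rcases le_or_gt (x 0) a with ha' | ha'
    · rw [shiftInterp_of_le hanti.antitone hpos ha']
      exact ⟨le_rfl, by linarith⟩
    · obtain ⟨hga, hsuba⟩ := shiftInterp_lt_and_sub_lt hanti hgap hlim ha ha'
      exact ⟨hga.le, by unfold gap at hsuba; linarith⟩
  · obtain ⟨l, hl⟩ := exists_mem_Ico hlim (ha.trans_lt hab) hb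
    rcases le_or_gt (x (l + 1)) a with ha' | ha'
    · exact shiftInterp_le_and_sub_lt_of_mem_Ico hanti hgap ⟨ha', hab.trans hl.2⟩ hl hab
    · obtain ⟨hgb, hsubb⟩ := mem_Ico_shiftInterp_and_sub hanti hgap hl
      obtain ⟨hga, hsuba⟩ := shiftInterp_lt_and_sub_lt hanti hgap hlim ha ha'
      exact ⟨(hga.trans_le hgb.1).le, hsuba.trans_le hsubb.1⟩

end DecreasingSeq

open DecreasingSeq in
theorem stmt16 (x : ℕ → ℝ) (hx : ∀ n, x n ∈ Set.Icc (0:ℝ) 1)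
    (hanti : StrictAnti x) (hlim : Tendsto x atTop (𝓝 0))
    (hgaps : ∀ n, x n - x (n + 1) > x (n + 1) - x (n + 2)) :
    ∃ g : ℝ → ℝ, Set.MapsTo g (Set.Icc 0 1) (Set.Icc 0 1) ∧
      (∀ a ∈ Set.Icc (0:ℝ) 1, ∀ b ∈ Set.Icc (0:ℝ) 1, a ≠ b → |g a - g b| < |a - b|) ∧
      (∀ n, g (x n) = x (n + 1)) ∧ g 0 = 0 ∧
      ({0} ∪ Set.range x : Set ℝ) =
        g '' ({0} ∪ Set.range x) ∪ (fun _ => x 0) '' ({0} ∪ Set.range x) := by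
  have hpos := pos_of_strictAnti_of_tendsto_zero hanti hlim
  have hgap : StrictAnti (gap x) := strictAnti_nat_of_succ_lt hgaps
  have hmono : MonotoneOn (shiftInterp x) (Ici 0) := fun a ha b _ hab =>
    hab.eq_or_lt.elim (fun h => h ▸ le_rfl) fun h =>
      (shiftInterp_le_and_sub_lt hanti hgap hlim ha h).1
  have hsub : StrictMonoOn (fun t => t - shiftInterp x t) (Ici 0) := fun a ha _ _ hab =>
    (shiftInterp_le_and_sub_lt hanti hgap hlim ha hab).2
  have hzero : shiftInterp x 0 = 0 := shiftInterp_of_nonpos hpos le_rfl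
  have happly := shiftInterp_apply hanti hpos
  refine ⟨shiftInterp x, fun t ht => ⟨?_, ?_⟩,
    fun a ha b hb hab => abs_sub_lt_abs_sub_of_monotoneOn_of_strictMonoOn hmono hsub ha.1 hb.1 hab,
    happly, hzero, singleton_union_range_eq_image_union_image_const hzero happly⟩
  · exact hzero ▸ hmono (mem_Ici.2 le_rfl) ht.1 ht.1
  · calc shiftInterp x t ≤ shiftInterp x 1 := hmono ht.1 (mem_Ici.2 zero_le_one) ht.2
      _ = x 1 := shiftInterp_of_le hanti.antitone hpos (hx 0).2
      _ ≤ 1 := (hx 1).2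
end
end
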